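/- Let (X_i)_{i≥1} be i.i.d. with law μ, let Ψ:[0,1]→(0,∞) be continuous with Ψ(1)=1, and set U_k^(n) := (k^γ/n)·Σ_{i=1}^n X_i^k/Ψ(X_i) for n≥1, k≥1. If (s_n) is a sequence of positive reals with s_n→∞ and s_n/n^{1/γ} → 0, then U_{s_n}^(n) → α₁Γ(γ+1) in 𝙿-probability as n→∞. -/

import Mathlib

/-!
Write `G x = μ [1 - x, 1]`. The layer-cake formula and the substitution `u = 1 - w / k` give
`k ^ γ ∫ x ^ k dμ = ∫₀ᵏ (1 - w / k) ^ (k - 1) k ^ γ G (w / k) dw`; the integrand tends to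
`α₁ w ^ γ e ^ (-w)` and is dominated by `C w ^ γ e ^ (-w / 2)`, so the moments satisfy
`k ^ γ ∫ x ^ k dμ → α₁ Γ(γ + 1)`. Since the mass of `x ^ k μ` concentrates at `1`, the same holds
with a weight `f` continuous on `[0, 1]` with `f 1 = 1`. Hence `U_{s_n}^{(n)}` has mean tending to
`α₁ Γ(γ + 1)` (weight `1 / Ψ`) and variance at most
`(s_n ^ γ / n) · s_n ^ γ ∫ x ^ (2 s_n) Ψ⁻² dμ`, which is `o(1) · O(1)` because `s_n ^ γ = o(n)`;
Chebyshev's inequality concludes.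
-/

open MeasureTheory ProbabilityTheory Filter Set Topology

lemma one_sub_div_rpow_le_exp_neg_half {w k : ℝ} (hw : 0 ≤ w) (hwk : w ≤ k) (hk : 2 ≤ k) :
    (1 - w / k) ^ (k - 1) ≤ Real.exp (-(w / 2)) := by
  have hk0 : 0 < k := by linarith
  have hbase : 0 ≤ 1 - w / k := sub_nonneg.mpr ((div_le_one hk0).mpr hwk)
  calc (1 - w / k) ^ (k - 1) ≤ Real.exp (-(w / k)) ^ (k - 1) := by
        gcongr
        · linarith
        · linarith [Real.add_one_le_exp (-(w / k))]
    _ = Real.exp (-(w / k * (k - 1))) := by rw [← Real.exp_mul, neg_mul]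
    _ ≤ Real.exp (-(w / 2)) := by
        gcongr
        rw [div_mul_eq_mul_div, le_div_iff₀ hk0]
        nlinarith

lemma tendsto_one_sub_div_rpow_sub_one (w : ℝ) :
    Tendsto (fun k : ℝ => (1 - w / k) ^ (k - 1)) atTop (𝓝 (Real.exp (-w))) := by
  have hbase : Tendsto (fun k : ℝ => 1 - w / k) atTop (𝓝 1) := by
    simpa using (tendsto_const_nhds (x := w)).div_atTop tendsto_id |>.const_sub 1
  have := (Real.tendsto_one_add_div_rpow_exp (-w)).div hbase one_ne_zero
  rw [div_one] at this
  refine this.congr' ?_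
  filter_upwards [eventually_gt_atTop |w|] with k hk
  have hpos : 0 < 1 - w / k := by
    have hk0 : 0 < k := lt_of_le_of_lt (abs_nonneg w) hk
    rw [sub_pos, div_lt_one hk0]
    exact lt_of_le_of_lt (le_abs_self w) hk
  simp only [Pi.div_apply, neg_div, ← sub_eq_add_neg, Real.rpow_sub hpos, Real.rpow_one]

lemma tendsto_rpow_mul_rpow_atTop_of_lt_one (γ : ℝ) {q : ℝ} (hq₀ : 0 < q) (hq₁ : q < 1) :
    Tendsto (fun k : ℝ => k ^ γ * q ^ k) atTop (𝓝 0) := by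
  have hlog : 0 < -Real.log q := neg_pos.mpr (Real.log_neg hq₀ hq₁)
  refine (tendsto_rpow_mul_exp_neg_mul_atTop_nhds_zero γ _ hlog).congr fun k => ?_
  rw [Real.rpow_def_of_pos hq₀, neg_neg, mul_comm (Real.log q)]

lemma integrableOn_exp_neg_half_mul_mul_rpow {γ : ℝ} (hγ : -1 < γ) (C : ℝ) :
    IntegrableOn (fun w => Real.exp (-(w / 2)) * (C * w ^ γ)) (Ioi 0) := by
  have h : IntegrableOn (fun w : ℝ => C * (w ^ γ * Real.exp (-(1 / 2) * w ^ (1 : ℝ)))) (Ioi 0) :=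
    (integrableOn_rpow_mul_exp_neg_mul_rpow hγ one_pos one_half_pos).const_mul C
  refine h.congr_fun (fun w _ => ?_) measurableSet_Ioi
  simp only [Real.rpow_one]
  ring_nf

lemma tendsto_rpow_div_of_tendsto_div_rpow_inv {γ : ℝ} (hγ : 0 < γ) {s : ℕ → ℝ}
    (hs : ∀ n, 0 ≤ s n) (hsn : Tendsto (fun n : ℕ => s n / (n : ℝ) ^ (1 / γ)) atTop (𝓝 0)) :
    Tendsto (fun n : ℕ => s n ^ γ / n) atTop (𝓝 0) := by
  have := ((Real.continuousAt_rpow_const 0 γ (Or.inr hγ.le)).tendsto.comp hsn)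
  rw [Real.zero_rpow hγ.ne'] at this
  refine this.congr fun n => ?_
  rw [Function.comp_apply, Real.div_rpow (hs n) (by positivity), ← Real.rpow_mul n.cast_nonneg,
    one_div_mul_cancel hγ.ne', Real.rpow_one]

section Moments

variable {μ : Measure ℝ} {γ α₁ : ℝ}

lemma memLp_rpow_mul [IsFiniteMeasure μ] (hμ : ∀ᵐ x ∂μ, x ∈ Icc (0 : ℝ) 1) {f : ℝ → ℝ}
    (hf : ContinuousOn f (Icc 0 1)) {k : ℝ} (hk : 0 ≤ k) (p : ENNReal) :
    MemLp (fun x => x ^ k * f x) p μ := by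
  obtain ⟨M, hM⟩ := isCompact_Icc.exists_bound_of_continuousOn hf
  have hmeas : AEStronglyMeasurable (fun x => x ^ k * f x) μ := by
    rw [← Measure.restrict_eq_self_of_ae_mem hμ]
    exact ((Real.continuous_rpow_const hk).continuousOn.mul hf).aestronglyMeasurable
      measurableSet_Icc
  refine MemLp.of_bound hmeas M ?_
  filter_upwards [hμ] with x hx
  rw [norm_mul, Real.norm_of_nonneg (Real.rpow_nonneg hx.1 k)]
  exact (mul_le_of_le_one_left (norm_nonneg _) (Real.rpow_le_one hx.1 hx.2 hk)).trans (hM x hx)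

lemma integrable_rpow [IsFiniteMeasure μ] (hμ : ∀ᵐ x ∂μ, x ∈ Icc (0 : ℝ) 1) {k : ℝ}
    (hk : 0 ≤ k) : Integrable (fun x : ℝ => x ^ k) μ := by
  simpa using (memLp_rpow_mul hμ continuousOn_const hk 1 (f := fun _ => 1)).integrable le_rfl

lemma integral_rpow_eq_integral_rpow_mul_measureReal_Icc [IsFiniteMeasure μ]
    (hμ : ∀ᵐ x ∂μ, x ∈ Icc (0 : ℝ) 1) {k : ℝ} (hk : 0 < k) :
    ∫ x, x ^ k ∂μ = ∫ u in Ioi 0, k * u ^ (k - 1) * μ.real (Icc u 1) := by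
  have hint := integrable_rpow hμ hk.le
  have hnn : 0 ≤ᵐ[μ] fun x : ℝ => x ^ k := by
    filter_upwards [hμ] with x hx using Real.rpow_nonneg hx.1 k
  rw [hint.integral_eq_integral_meas_le hnn, ← integral_comp_rpow_Ioi_of_pos hk]
  refine setIntegral_congr_fun measurableSet_Ioi fun u (hu : 0 < u) => ?_
  have hlevel : {x : ℝ | u ^ k ≤ x ^ k} =ᵐ[μ] Icc u 1 := by
    filter_upwards [hμ] with x hx
    change (u ^ k ≤ x ^ k) = (u ≤ x ∧ x ≤ 1)
    rw [Real.rpow_le_rpow_iff hu.le hx.1 hk, eq_iff_iff, iff_self_and]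
    exact fun _ => hx.2
  rw [smul_eq_mul, measureReal_congr hlevel]

noncomputable def momentIntegrand (μ : Measure ℝ) (γ k : ℝ) : ℝ → ℝ :=
  (Ioc 0 k).indicator fun w => (1 - w / k) ^ (k - 1) * (k ^ γ * μ.real (Icc (1 - w / k) 1))

lemma rpow_mul_integral_rpow_eq_integral_momentIntegrand [IsFiniteMeasure μ]
    (hμ : ∀ᵐ x ∂μ, x ∈ Icc (0 : ℝ) 1) (γ : ℝ) {k : ℝ} (hk : 0 < k) :
    k ^ γ * ∫ x, x ^ k ∂μ = ∫ w in Ioi 0, momentIntegrand μ γ k w := by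
  set φ : ℝ → ℝ := fun u => u ^ (k - 1) * μ.real (Icc u 1)
  have hvanish : ∀ u ∈ Ioi (0 : ℝ) \ Ioc 0 1, k * u ^ (k - 1) * μ.real (Icc u 1) = 0 :=
    fun u hu => by
      have : 1 < u := by simpa using hu
      simp [Icc_eq_empty_of_lt this]
  -- the bounds `1 - k / k` and `1 - 0 / k` are the form in which `integral_comp_sub_div`
  -- performs the substitution `u = 1 - w / k`
  calc k ^ γ * ∫ x, x ^ k ∂μ = k ^ γ * (k • ∫ u in (1 - k / k)..(1 - 0 / k), φ u) := by
        rw [integral_rpow_eq_integral_rpow_mul_measureReal_Icc hμ hk,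
          setIntegral_eq_of_subset_of_forall_sdiff_eq_zero measurableSet_Ioi Ioc_subset_Ioi_self
            hvanish, div_self hk.ne', sub_self, zero_div, sub_zero,
          intervalIntegral.integral_of_le zero_le_one, smul_eq_mul, ← integral_const_mul]
        simp only [φ, mul_assoc, integral_const_mul]
    _ = ∫ w in Ioi 0, momentIntegrand μ γ k w := by
        rw [← intervalIntegral.integral_comp_sub_div φ hk.ne',
          ← intervalIntegral.integral_const_mul, momentIntegrand,
          setIntegral_indicator measurableSet_Ioc,
          inter_eq_self_of_subset_right Ioc_subset_Ioi_self, intervalIntegral.integral_of_le hk.le]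
        simp only [φ, mul_left_comm]

lemma exists_measureReal_Icc_one_sub_le_mul_rpow [IsFiniteMeasure μ] (hγ : 0 < γ)
    (hα₁ : 0 < α₁)
    (hμreg : Tendsto (fun x => μ.real (Icc (1 - x) 1) / (α₁ * x ^ γ)) (𝓝[>] 0) (𝓝 1)) :
    ∃ C, ∀ x > 0, μ.real (Icc (1 - x) 1) ≤ C * x ^ γ := by
  obtain ⟨δ, hδ : 0 < δ, hδsub⟩ :=
    mem_nhdsGT_iff_exists_Ioo_subset.mp (hμreg.eventually (gt_mem_nhds one_lt_two))
  refine ⟨2 * α₁ + μ.real univ / δ ^ γ, fun x hx => ?_⟩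
  have hxγ : 0 < x ^ γ := Real.rpow_pos_of_pos hx γ
  rcases lt_or_ge x δ with hxδ | hδx
  · have hlt : μ.real (Icc (1 - x) 1) / (α₁ * x ^ γ) < 2 := hδsub ⟨hx, hxδ⟩
    rw [div_lt_iff₀ (by positivity)] at hlt
    nlinarith [div_nonneg (measureReal_nonneg (μ := μ) (s := univ)) (Real.rpow_pos_of_pos hδ γ).le]
  · calc μ.real (Icc (1 - x) 1) ≤ μ.real univ * (x / δ) ^ γ := by
          refine (measureReal_mono (subset_univ _)).trans (le_mul_of_one_le_right
            measureReal_nonneg (Real.one_le_rpow ((one_le_div hδ).mpr hδx) hγ.le))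
      _ = μ.real univ / δ ^ γ * x ^ γ := by
          rw [Real.div_rpow hx.le hδ.le]; ring
      _ ≤ (2 * α₁ + μ.real univ / δ ^ γ) * x ^ γ := by gcongr; linarith

lemma tendsto_rpow_mul_measureReal_Icc_one_sub_div (hα₁ : α₁ ≠ 0)
    (hμreg : Tendsto (fun x => μ.real (Icc (1 - x) 1) / (α₁ * x ^ γ)) (𝓝[>] 0) (𝓝 1))
    {w : ℝ} (hw : 0 < w) :
    Tendsto (fun k : ℝ => k ^ γ * μ.real (Icc (1 - w / k) 1)) atTop (𝓝 (α₁ * w ^ γ)) := by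
  have hwk : Tendsto (fun k : ℝ => w / k) atTop (𝓝[>] 0) :=
    tendsto_nhdsWithin_iff.mpr ⟨tendsto_const_nhds.div_atTop tendsto_id,
      (eventually_gt_atTop 0).mono fun k hk => div_pos hw hk⟩
  have := ((hμreg.comp hwk).mul_const (α₁ * w ^ γ))
  rw [one_mul] at this
  refine this.congr' ?_
  filter_upwards [eventually_gt_atTop 0] with k hk
  have : 0 < w ^ γ := Real.rpow_pos_of_pos hw γ
  have : 0 < k ^ γ := Real.rpow_pos_of_pos hk γ
  simp only [Function.comp_apply, Real.div_rpow hw.le hk.le]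
  field_simp

lemma measurable_momentIntegrand [IsFiniteMeasure μ] (γ k : ℝ) :
    Measurable (momentIntegrand μ γ k) := by
  have hG : Measurable fun u : ℝ => μ.real (Icc u 1) :=
    Antitone.measurable fun u v huv => measureReal_mono (Icc_subset_Icc_left huv)
  have := hG.comp (f := fun w : ℝ => 1 - w / k) (by fun_prop)
  exact Measurable.indicator (by fun_prop) measurableSet_Ioc

lemma norm_momentIntegrand_le {C : ℝ} (hC : ∀ x > 0, μ.real (Icc (1 - x) 1) ≤ C * x ^ γ)
    (hC₀ : 0 ≤ C) {k w : ℝ} (hk : 2 ≤ k) (hw : 0 < w) :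
    ‖momentIntegrand μ γ k w‖ ≤ Real.exp (-(w / 2)) * (C * w ^ γ) := by
  by_cases hwk : w ∈ Ioc 0 k
  · have hk₀ : 0 < k := by linarith
    have htail : k ^ γ * μ.real (Icc (1 - w / k) 1) ≤ C * w ^ γ := by
      calc k ^ γ * μ.real (Icc (1 - w / k) 1) ≤ k ^ γ * (C * (w / k) ^ γ) := by
            gcongr; exact hC _ (div_pos hw hk₀)
        _ = C * w ^ γ := by
            rw [Real.div_rpow hw.le hk₀.le]; field_simp [(Real.rpow_pos_of_pos hk₀ γ).ne']
    have hbase : 0 ≤ 1 - w / k := sub_nonneg.mpr ((div_le_one hk₀).mpr hwk.2)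
    rw [momentIntegrand, indicator_of_mem hwk, Real.norm_of_nonneg (by positivity)]
    exact mul_le_mul (one_sub_div_rpow_le_exp_neg_half hw.le hwk.2 hk) htail (by positivity)
      (Real.exp_pos _).le
  · rw [momentIntegrand, indicator_of_notMem hwk, norm_zero]
    positivity

lemma tendsto_momentIntegrand (hα₁ : α₁ ≠ 0)
    (hμreg : Tendsto (fun x => μ.real (Icc (1 - x) 1) / (α₁ * x ^ γ)) (𝓝[>] 0) (𝓝 1))
    {w : ℝ} (hw : 0 < w) :
    Tendsto (fun k => momentIntegrand μ γ k w) atTop (𝓝 (Real.exp (-w) * (α₁ * w ^ γ))) := by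
  refine ((tendsto_one_sub_div_rpow_sub_one w).mul
    (tendsto_rpow_mul_measureReal_Icc_one_sub_div hα₁ hμreg hw)).congr' ?_
  filter_upwards [eventually_ge_atTop w] with k hk
  rw [momentIntegrand, indicator_of_mem (show w ∈ Ioc 0 k from ⟨hw, hk⟩)]

theorem tendsto_rpow_mul_integral_rpow [IsFiniteMeasure μ] (hγ : 0 < γ) (hα₁ : 0 < α₁)
    (hμ : ∀ᵐ x ∂μ, x ∈ Icc (0 : ℝ) 1)
    (hμreg : Tendsto (fun x => μ.real (Icc (1 - x) 1) / (α₁ * x ^ γ)) (𝓝[>] 0) (𝓝 1)) :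
    Tendsto (fun k : ℝ => k ^ γ * ∫ x, x ^ k ∂μ) atTop (𝓝 (α₁ * Real.Gamma (γ + 1))) := by
  obtain ⟨C, hC⟩ := exists_measureReal_Icc_one_sub_le_mul_rpow hγ hα₁ hμreg
  have hC₀ : 0 ≤ C := by simpa using measureReal_nonneg.trans (hC 1 one_pos)
  have hGamma : ∫ w in Ioi 0, Real.exp (-w) * (α₁ * w ^ γ) = α₁ * Real.Gamma (γ + 1) := by
    rw [Real.Gamma_eq_integral (by linarith), ← integral_const_mul, add_sub_cancel_right]
    exact setIntegral_congr_fun measurableSet_Ioi fun w _ => by ring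
  rw [← hGamma]
  refine (tendsto_integral_filter_of_dominated_convergence _
    (Eventually.of_forall fun k => (measurable_momentIntegrand γ k).aestronglyMeasurable)
    ((eventually_ge_atTop 2).mono fun k hk => (ae_restrict_iff' measurableSet_Ioi).mpr
      (Eventually.of_forall fun w hw => norm_momentIntegrand_le hC hC₀ hk hw))
    (integrableOn_exp_neg_half_mul_mul_rpow (by linarith) C)
    ((ae_restrict_iff' measurableSet_Ioi).mpr
      (Eventually.of_forall fun w hw => tendsto_momentIntegrand hα₁.ne' hμreg hw))).congr' ?_
  filter_upwards [eventually_gt_atTop 0] with k hk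
  exact (rpow_mul_integral_rpow_eq_integral_momentIntegrand hμ γ hk).symm

lemma abs_integral_rpow_mul_le [IsProbabilityMeasure μ] (hμ : ∀ᵐ x ∂μ, x ∈ Icc (0 : ℝ) 1)
    {h : ℝ → ℝ} (hh : ContinuousOn h (Icc 0 1)) {M ε q k : ℝ}
    (hM : ∀ x ∈ Icc 0 1, |h x| ≤ M) (hε : ∀ x ∈ Ioc q 1, |h x| ≤ ε) (hε₀ : 0 ≤ ε)
    (hq : 0 ≤ q) (hk : 0 ≤ k) :
    |∫ x, x ^ k * h x ∂μ| ≤ ε * ∫ x, x ^ k ∂μ + M * q ^ k := by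
  have hpt : ∀ᵐ x ∂μ, |x ^ k * h x| ≤ ε * x ^ k + M * q ^ k := by
    filter_upwards [hμ] with x hx
    have hxk : 0 ≤ x ^ k := Real.rpow_nonneg hx.1 k
    have hM₀ : 0 ≤ M := (abs_nonneg _).trans (hM x hx)
    rw [abs_mul, abs_of_nonneg hxk]
    rcases le_or_gt x q with hxq | hqx
    · nlinarith [hM x hx, Real.rpow_le_rpow hx.1 hxq hk, abs_nonneg (h x)]
    · nlinarith [hε x ⟨hqx, hx.2⟩, Real.rpow_nonneg hq k]
  calc |∫ x, x ^ k * h x ∂μ| ≤ ∫ x, |x ^ k * h x| ∂μ := abs_integral_le_integral_abs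
    _ ≤ ∫ x, (ε * x ^ k + M * q ^ k) ∂μ :=
        integral_mono_ae ((memLp_rpow_mul hμ hh hk 1).integrable le_rfl).abs
          (((integrable_rpow hμ hk).const_mul ε).add (integrable_const _)) hpt
    _ = ε * ∫ x, x ^ k ∂μ + M * q ^ k := by
        rw [integral_add ((integrable_rpow hμ hk).const_mul ε) (integrable_const _),
          integral_const_mul, integral_const, probReal_univ, one_smul]

theorem tendsto_rpow_mul_integral_rpow_mul_of_eq_zero [IsProbabilityMeasure μ]
    (hμ : ∀ᵐ x ∂μ, x ∈ Icc (0 : ℝ) 1) {L : ℝ}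
    (hL : Tendsto (fun k : ℝ => k ^ γ * ∫ x, x ^ k ∂μ) atTop (𝓝 L))
    {h : ℝ → ℝ} (hh : ContinuousOn h (Icc 0 1)) (h1 : h 1 = 0) :
    Tendsto (fun k : ℝ => k ^ γ * ∫ x, x ^ k * h x ∂μ) atTop (𝓝 0) := by
  obtain ⟨M, hM⟩ := isCompact_Icc.exists_bound_of_continuousOn hh
  rw [Metric.tendsto_nhds]
  intro ε hε
  obtain ⟨η, hη, hηL⟩ := exists_pos_mul_lt (half_pos hε) (|L| + 1)
  have hnear : ∀ᶠ x in 𝓝[≤] (1 : ℝ), |h x| < η := by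
    rw [← nhdsWithin_Icc_eq_nhdsLE zero_lt_one]
    exact (hh 1 (right_mem_Icc.mpr zero_le_one)).abs.eventually
      (gt_mem_nhds (by simpa [h1] using hη))
  obtain ⟨l, hl : l < 1, hlη⟩ := mem_nhdsLE_iff_exists_Ioc_subset.mp hnear
  set q := max l (1 / 2)
  have hq₀ : 0 < q := lt_max_of_lt_right one_half_pos
  have hq₁ : q < 1 := max_lt hl one_half_lt_one
  have hhq : ∀ x ∈ Ioc q 1, |h x| ≤ η := fun x hx =>
    (hlη ⟨(le_max_left l _).trans_lt hx.1, hx.2⟩).le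
  have hmoment : ∀ᶠ k : ℝ in atTop, k ^ γ * ∫ x, x ^ k ∂μ < |L| + 1 :=
    hL.eventually (gt_mem_nhds (by linarith [le_abs_self L]))
  have hremainder : ∀ᶠ k : ℝ in atTop, M * (k ^ γ * q ^ k) < ε / 2 := by
    have := (tendsto_rpow_mul_rpow_atTop_of_lt_one γ hq₀ hq₁).const_mul M
    rw [mul_zero] at this
    exact this.eventually (gt_mem_nhds (half_pos hε))
  filter_upwards [hmoment, hremainder, eventually_gt_atTop 0] with k hk₁ hk₂ hk₀
  have hkγ : 0 ≤ k ^ γ := Real.rpow_nonneg hk₀.le γ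
  have hmoment₀ : 0 ≤ k ^ γ * ∫ x, x ^ k ∂μ :=
    mul_nonneg hkγ (integral_nonneg_of_ae (hμ.mono fun x hx => Real.rpow_nonneg hx.1 k))
  rw [Real.dist_eq, sub_zero, abs_mul, abs_of_nonneg hkγ]
  calc k ^ γ * |∫ x, x ^ k * h x ∂μ| ≤ k ^ γ * (η * ∫ x, x ^ k ∂μ + M * q ^ k) := by
        gcongr
        exact abs_integral_rpow_mul_le hμ hh (fun x hx => by simpa using hM x hx) hhq hη.le
          hq₀.le hk₀.le
    _ = η * (k ^ γ * ∫ x, x ^ k ∂μ) + M * (k ^ γ * q ^ k) := by ring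
    _ < ε := by nlinarith

theorem tendsto_rpow_mul_integral_rpow_mul [IsProbabilityMeasure μ] (hγ : 0 < γ)
    (hα₁ : 0 < α₁) (hμ : ∀ᵐ x ∂μ, x ∈ Icc (0 : ℝ) 1)
    (hμreg : Tendsto (fun x => μ.real (Icc (1 - x) 1) / (α₁ * x ^ γ)) (𝓝[>] 0) (𝓝 1))
    {f : ℝ → ℝ} (hf : ContinuousOn f (Icc 0 1)) (hf1 : f 1 = 1) :
    Tendsto (fun k : ℝ => k ^ γ * ∫ x, x ^ k * f x ∂μ) atTop
      (𝓝 (α₁ * Real.Gamma (γ + 1))) := by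
  have hmoment := tendsto_rpow_mul_integral_rpow hγ hα₁ hμ hμreg
  have hdiff := tendsto_rpow_mul_integral_rpow_mul_of_eq_zero hμ hmoment
    (h := fun x => f x - 1) (hf.sub continuousOn_const) (by rw [hf1, sub_self])
  rw [← add_zero (α₁ * Real.Gamma (γ + 1))]
  refine (hmoment.add hdiff).congr' ?_
  filter_upwards [eventually_gt_atTop 0] with k hk
  rw [← mul_add, ← integral_add (integrable_rpow hμ hk.le)
    ((memLp_rpow_mul hμ (f := fun x => f x - 1) (hf.sub continuousOn_const) hk.le 1).integrable
      le_rfl)]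
  simp only [mul_sub, mul_one, add_sub_cancel]

theorem tendsto_rpow_mul_integral_sq_rpow_mul [IsProbabilityMeasure μ] (hγ : 0 < γ)
    (hα₁ : 0 < α₁) (hμ : ∀ᵐ x ∂μ, x ∈ Icc (0 : ℝ) 1)
    (hμreg : Tendsto (fun x => μ.real (Icc (1 - x) 1) / (α₁ * x ^ γ)) (𝓝[>] 0) (𝓝 1))
    {f : ℝ → ℝ} (hf : ContinuousOn f (Icc 0 1)) (hf1 : f 1 = 1) :
    Tendsto (fun k : ℝ => k ^ γ * ∫ x, (x ^ k * f x) ^ 2 ∂μ) atTop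
      (𝓝 (2 ^ (-γ) * (α₁ * Real.Gamma (γ + 1)))) := by
  have h2k := (tendsto_rpow_mul_integral_rpow_mul hγ hα₁ hμ hμreg (f := fun x => f x ^ 2)
    (hf.pow 2) (by simp [hf1])).comp (tendsto_id.const_mul_atTop two_pos)
  refine (h2k.const_mul _).congr' ?_
  filter_upwards [eventually_gt_atTop 0] with k hk
  have hsquare : ∫ x, (x ^ k * f x) ^ 2 ∂μ = ∫ x, x ^ (2 * k) * f x ^ 2 ∂μ :=
    integral_congr_ae <| hμ.mono fun x hx => by
      simp only [mul_pow, mul_comm 2 k]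
      rw [← Real.rpow_mul_natCast hx.1 k 2, Nat.cast_ofNat]
  rw [Function.comp_apply, id, hsquare, Real.mul_rpow zero_le_two hk.le,
    Real.rpow_neg zero_le_two]
  field_simp [(Real.rpow_pos_of_pos two_pos γ).ne']

end Moments

lemma tendsto_measure_lt_abs_sub_of_tendsto_variance {Ω ι : Type*} [MeasurableSpace Ω]
    {P : Measure Ω} [IsFiniteMeasure P] {l : Filter ι} {V : ι → Ω → ℝ} {L : ℝ}
    (hV : ∀ n, MemLp (V n) 2 P) (hmean : Tendsto (fun n => P[V n]) l (𝓝 L))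
    (hvar : Tendsto (fun n => variance (V n) P) l (𝓝 0)) {ε : ℝ} (hε : 0 < ε) :
    Tendsto (fun n => P {ω | ε < |V n ω - L|}) l (𝓝 0) := by
  have hbound : Tendsto (fun n => ENNReal.ofReal (variance (V n) P / (ε / 2) ^ 2)) l (𝓝 0) := by
    simpa using ENNReal.tendsto_ofReal (hvar.div_const ((ε / 2) ^ 2))
  refine tendsto_of_tendsto_of_tendsto_of_le_of_le' tendsto_const_nhds hbound
    (Eventually.of_forall fun _ => zero_le) ?_
  filter_upwards [Metric.tendsto_nhds.mp hmean (ε / 2) (half_pos hε)] with n hn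
  refine (measure_mono fun ω (hω : ε < |V n ω - L|) => ?_).trans
    (meas_ge_le_variance_div_sq (hV n) (half_pos hε))
  rw [Real.dist_eq] at hn
  show ε / 2 ≤ |V n ω - P[V n]|
  linarith [abs_sub_le (V n ω) P[V n] L]

section Sampling

variable {Ω : Type*} [MeasurableSpace Ω] {P : Measure Ω} {X : ℕ → Ω → ℝ} {μ : Measure ℝ}

lemma integral_sum_comp_eq_mul (hX : ∀ i, AEMeasurable (X i) P) (hlaw : ∀ i, P.map (X i) = μ)
    {g : ℝ → ℝ} (hg : Integrable g μ) (n : ℕ) :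
    ∫ ω, ∑ i ∈ Finset.range n, g (X i ω) ∂P = n * ∫ x, g x ∂μ := by
  have hcomp : ∀ i, ∫ ω, g (X i ω) ∂P = ∫ x, g x ∂μ := fun i => by
    rw [← hlaw i, integral_map (hX i) (hlaw i ▸ hg.aestronglyMeasurable)]
  rw [integral_finsetSum _ fun i _ => (hlaw i ▸ hg).comp_aemeasurable (hX i)]
  simp [hcomp]

lemma memLp_sum_comp (hX : ∀ i, AEMeasurable (X i) P) (hlaw : ∀ i, P.map (X i) = μ)
    {g : ℝ → ℝ} {p : ENNReal} (hg : MemLp g p μ) (n : ℕ) :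
    MemLp (fun ω => ∑ i ∈ Finset.range n, g (X i ω)) p P :=
  memLp_finsetSum _ fun i _ => (hlaw i ▸ hg).comp_of_map (hX i)

lemma variance_sum_comp_le [IsProbabilityMeasure P] (hX : ∀ i, AEMeasurable (X i) P)
    (hlaw : ∀ i, P.map (X i) = μ) (hindep : iIndepFun X P) {g : ℝ → ℝ} (hg : MemLp g 2 μ)
    (n : ℕ) :
    variance (fun ω => ∑ i ∈ Finset.range n, g (X i ω)) P ≤ n * ∫ x, g x ^ 2 ∂μ := by
  have hmem : ∀ i, MemLp (g ∘ X i) 2 P := fun i => (hlaw i ▸ hg).comp_of_map (hX i)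
  have hpair : Set.Pairwise ↑(Finset.range n) fun i j => IndepFun (g ∘ X i) (g ∘ X j) P :=
    fun i _ j _ hij => (hindep.comp₀ (fun _ => g) hX
      fun i => (hlaw i ▸ hg.aestronglyMeasurable.aemeasurable)).indepFun hij
  have hsq : ∀ i, P[(g ∘ X i) ^ 2] = ∫ x, g x ^ 2 ∂μ := fun i => by
    rw [← hlaw i, integral_map (hX i) (hlaw i ▸ (hg.aestronglyMeasurable.pow 2))]
    rfl
  calc variance (fun ω => ∑ i ∈ Finset.range n, g (X i ω)) P
      = ∑ i ∈ Finset.range n, variance (g ∘ X i) P := by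
        rw [← IndepFun.variance_sum (fun i _ => hmem i) hpair]
        congr 1
        ext ω
        simp
    _ ≤ ∑ _i ∈ Finset.range n, ∫ x, g x ^ 2 ∂μ :=
        Finset.sum_le_sum fun i _ => (hsq i) ▸ variance_le_expectation_sq (hmem i).1
    _ = n * ∫ x, g x ^ 2 ∂μ := by simp


theorem tendsto_measure_lt_abs_mul_sum_comp_sub [IsProbabilityMeasure P]
    (hX : ∀ i, AEMeasurable (X i) P) (hlaw : ∀ i, P.map (X i) = μ) (hindep : iIndepFun X P)
    {c : ℕ → ℝ} {g : ℕ → ℝ → ℝ} (hg : ∀ n, MemLp (g n) 2 μ) {L : ℝ}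
    (hmean : Tendsto (fun n => c n * (n * ∫ x, g n x ∂μ)) atTop (𝓝 L))
    (hvar : Tendsto (fun n => c n ^ 2 * (n * ∫ x, g n x ^ 2 ∂μ)) atTop (𝓝 0))
    {ε : ℝ} (hε : 0 < ε) :
    Tendsto (fun n => P {ω | ε < |c n * ∑ i ∈ Finset.range n, g n (X i ω) - L|}) atTop (𝓝 0) := by
  have : IsProbabilityMeasure μ := hlaw 0 ▸ Measure.isProbabilityMeasure_map (hX 0)
  refine tendsto_measure_lt_abs_sub_of_tendsto_variance
    (fun n => (memLp_sum_comp hX hlaw (hg n) n).const_mul (c n)) ?_ ?_ hε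
  · refine hmean.congr fun n => ?_
    rw [integral_const_mul, integral_sum_comp_eq_mul hX hlaw ((hg n).integrable one_le_two)]
  · refine squeeze_zero (fun n => variance_nonneg _ _) (fun n => ?_) hvar
    rw [variance_const_mul]
    gcongr
    exact variance_sum_comp_le hX hlaw hindep (hg n) n

end Sampling

/-- **Lemma A.3(ii).**  Let `(X_i)` be i.i.d. with law `μ` on `[0,1]`, regularly varying
at `1` with index `γ`, let `Ψ : [0,1] → (0,∞)` be continuous with `Ψ(1) = 1`, and set
`U_k^{(n)} = (k^γ/n) ∑_{i<n} X_i^k/Ψ(X_i)`.  If `s_n → ∞` and `s_n ≪ n^{1/γ}`, then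
`U_{s_n}^{(n)} → α₁ Γ(γ+1)` in `𝙿`-probability. -/
theorem U_converges
    (γ α₁ : ℝ) (hγ : 0 < γ) (hα₁ : 0 < α₁)
    (μ : Measure ℝ) [IsProbabilityMeasure μ]
    (hμsupp : μ (Set.Icc (0:ℝ) 1)ᶜ = 0)
    (hμreg : Tendsto (fun x : ℝ => (μ (Set.Icc (1 - x) 1)).toReal / (α₁ * x ^ γ))
      (nhdsWithin 0 (Set.Ioi 0)) (nhds 1))
    (Ψ : ℝ → ℝ) (hΨcont : ContinuousOn Ψ (Set.Icc 0 1))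
    (hΨpos : ∀ x ∈ Set.Icc (0:ℝ) 1, 0 < Ψ x) (hΨ1 : Ψ 1 = 1)
    (Ω : Type*) [MeasurableSpace Ω] (Pr : Measure Ω) [IsProbabilityMeasure Pr]
    (X : ℕ → Ω → ℝ) (hXmeas : ∀ i, Measurable (X i))
    (hXlaw : ∀ i, Measure.map (X i) Pr = μ)
    (hXindep : iIndepFun X Pr)
    (U : ℕ → ℝ → Ω → ℝ)
    (hU : ∀ n s ω, U n s ω =
      s ^ γ / n * ∑ i ∈ Finset.range n, X i ω ^ s / Ψ (X i ω)) :
    ∀ s : ℕ → ℝ, (∀ n, 0 < s n) →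
      Tendsto s atTop atTop →
      Tendsto (fun n : ℕ => s n / (n : ℝ) ^ (1/γ)) atTop (nhds 0) →
      ∀ ε > (0:ℝ),
        Tendsto (fun n : ℕ => Pr {ω | ε < |U n (s n) ω - α₁ * Real.Gamma (γ + 1)|})
          atTop (nhds 0) := by
  intro s hs₀ hs hsn ε hε
  have hμ : ∀ᵐ x ∂μ, x ∈ Icc (0 : ℝ) 1 := ae_iff.mpr hμsupp
  have hf : ContinuousOn (fun x => (Ψ x)⁻¹) (Icc 0 1) :=
    hΨcont.inv₀ fun x hx => (hΨpos x hx).ne'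
  have hf1 : (Ψ 1)⁻¹ = 1 := by rw [hΨ1, inv_one]
  have hmean : Tendsto (fun n => s n ^ γ / n * (n * ∫ x, x ^ s n * (Ψ x)⁻¹ ∂μ)) atTop
      (𝓝 (α₁ * Real.Gamma (γ + 1))) := by
    refine ((tendsto_rpow_mul_integral_rpow_mul hγ hα₁ hμ hμreg hf hf1).comp hs).congr' ?_
    filter_upwards [eventually_ne_atTop 0] with n hn
    rw [Function.comp_apply]
    field_simp
  have hvar : Tendsto (fun n => (s n ^ γ / n) ^ 2 * (n * ∫ x, (x ^ s n * (Ψ x)⁻¹) ^ 2 ∂μ))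
      atTop (𝓝 0) := by
    have := (tendsto_rpow_div_of_tendsto_div_rpow_inv hγ (fun n => (hs₀ n).le) hsn).mul
      ((tendsto_rpow_mul_integral_sq_rpow_mul hγ hα₁ hμ hμreg hf hf1).comp hs)
    rw [zero_mul] at this
    refine this.congr' ?_
    filter_upwards [eventually_ne_atTop 0] with n hn
    rw [Function.comp_apply]
    field_simp
  simpa only [hU, div_eq_mul_inv] using tendsto_measure_lt_abs_mul_sum_comp_sub
    (fun i => (hXmeas i).aemeasurable) hXlaw hXindep
    (fun n => memLp_rpow_mul hμ hf (hs₀ n).le 2) hmean hvar hε
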